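/- The embedding functor S : OGraph → Graph/2_G is a selective adhesive functor: it is faithful, preserves monomorphisms, creates isomorphisms, and reflects pushouts. -/

import Mathlib

open CategoryTheory Limits

/-! Directed graphs as `E ⇉ P` data, the type graph `2_G`, the slice category of
`2_G`-typed graphs, and the category `OGraph` of open-graphs. -/

structure PreGraph : Type 1 where
  E : Type
  P : Type
  s : E → P
  t : E → P

/-- The points of the type graph `2_G`: vertices `V` and edge-points `ε`. -/
inductive TyP : Type
  | V : TyP
  | eps : TyP
  deriving DecidableEq

/-- The edges of the type graph `2_G`: `V → ε`, `ε → V` and the loop on `ε`. -/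
inductive TyE : Type
  | ve : TyE
  | ev : TyE
  | loop : TyE
  deriving DecidableEq

/-- The type graph `2_G`. -/
def twoG : PreGraph where
  E := TyE
  P := TyP
  s e := match e with | .ve => .V | .ev => .eps | .loop => .eps
  t e := match e with | .ve => .eps | .ev => .V | .loop => .eps

structure GraphHom (G H : PreGraph) : Type where
  pe : G.E → H.E
  pp : G.P → H.P
  hs : ∀ e, H.s (pe e) = pp (G.s e)
  ht : ∀ e, H.t (pe e) = pp (G.t e)

def GraphHom.idHom (G : PreGraph) : GraphHom G G :=
  ⟨fun e => e, fun p => p, fun _ => rfl, fun _ => rfl⟩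

def GraphHom.comp {G H K : PreGraph} (f : GraphHom G H) (g : GraphHom H K) :
    GraphHom G K :=
  ⟨fun e => g.pe (f.pe e), fun p => g.pp (f.pp p),
   fun e => by rw [g.hs, f.hs], fun e => by rw [g.ht, f.ht]⟩

/-- An object of the slice category `Graph/2_G`: a graph together with a typing
morphism into `2_G`. -/
structure TypedGraph : Type 1 where
  G : PreGraph
  τ : GraphHom G twoG

/-- A morphism of `2_G`-typed graphs: a graph morphism commuting with the typing. -/
@[ext]
structure TypedHom (X Y : TypedGraph) : Type where
  h : GraphHom X.G Y.G
  comm_pp : ∀ p, Y.τ.pp (h.pp p) = X.τ.pp p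
  comm_pe : ∀ e, Y.τ.pe (h.pe e) = X.τ.pe e

def TypedHom.idHom (X : TypedGraph) : TypedHom X X :=
  ⟨GraphHom.idHom X.G, fun _ => rfl, fun _ => rfl⟩

def TypedHom.comp {X Y Z : TypedGraph} (f : TypedHom X Y) (g : TypedHom Y Z) :
    TypedHom X Z :=
  ⟨f.h.comp g.h,
   fun p => by show Z.τ.pp (g.h.pp (f.h.pp p)) = _; rw [g.comm_pp, f.comm_pp],
   fun e => by show Z.τ.pe (g.h.pe (f.h.pe e)) = _; rw [g.comm_pe, f.comm_pe]⟩

instance : Category TypedGraph where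
  Hom := TypedHom
  id := TypedHom.idHom
  comp := TypedHom.comp
  id_comp _ := rfl
  comp_id _ := rfl
  assoc _ _ _ := rfl

/-- An open-graph: a `2_G`-typed graph in which every edge-point has at most one
in-edge and at most one out-edge. -/
structure OGraph : Type 1 where
  X : TypedGraph
  open_in : ∀ p, X.τ.pp p = TyP.eps →
    ∀ e₁ e₂, X.G.t e₁ = p → X.G.t e₂ = p → e₁ = e₂
  open_out : ∀ p, X.τ.pp p = TyP.eps →
    ∀ e₁ e₂, X.G.s e₁ = p → X.G.s e₂ = p → e₁ = e₂

/-- A typed-graph morphism is full on vertices when every edge adjacent to the image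
`f(v)` of a vertex `v` is the image of an edge adjacent to `v`. -/
def FullOnVertices {X Y : TypedGraph} (f : TypedHom X Y) : Prop :=
  ∀ v, X.τ.pp v = TyP.V → ∀ e, (Y.G.s e = f.h.pp v ∨ Y.G.t e = f.h.pp v) →
    ∃ e', f.h.pe e' = e ∧ (X.G.s e' = v ∨ X.G.t e' = v)

/-- A morphism of open-graphs: a typed-graph morphism that is full on vertices. -/
@[ext]
structure OHom (G H : OGraph) : Type where
  f : TypedHom G.X H.X
  full : FullOnVertices f

theorem fullOnVertices_id (G : OGraph) : FullOnVertices (TypedHom.idHom G.X) :=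
  fun _ _ e he => ⟨e, rfl, he⟩

theorem fullOnVertices_comp {G H K : OGraph} (f : TypedHom G.X H.X)
    (g : TypedHom H.X K.X) (hf : FullOnVertices f) (hg : FullOnVertices g) :
    FullOnVertices (f.comp g) := by
  intro v hv e he
  have hfv : H.X.τ.pp (f.h.pp v) = TyP.V := by rw [f.comm_pp]; exact hv
  obtain ⟨e', he', hadj'⟩ := hg (f.h.pp v) hfv e he
  obtain ⟨e'', he'', hadj''⟩ := hf v hv e' hadj'
  exact ⟨e'', by show g.h.pe (f.h.pe e'') = e; rw [he'', he'], hadj''⟩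

def OHom.idHom (G : OGraph) : OHom G G := ⟨TypedHom.idHom G.X, fullOnVertices_id G⟩

def OHom.comp {G H K : OGraph} (φ : OHom G H) (ψ : OHom H K) : OHom G K :=
  ⟨φ.f.comp ψ.f, fullOnVertices_comp φ.f ψ.f φ.full ψ.full⟩

instance : Category OGraph where
  Hom := OHom
  id := OHom.idHom
  comp := OHom.comp
  id_comp _ := rfl
  comp_id _ := rfl
  assoc _ _ _ := rfl

/-- The point map of an open-graph morphism. -/
def OHom.pp {G H : OGraph} (φ : OHom G H) : G.X.G.P → H.X.G.P := φ.f.h.pp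

/-- The edge map of an open-graph morphism. -/
def OHom.pe {G H : OGraph} (φ : OHom G H) : G.X.G.E → H.X.G.E := φ.f.h.pe

/-- The embedding functor `S : OGraph ⥤ Graph/2_G`. -/
def S : OGraph ⥤ TypedGraph where
  obj G := G.X
  map f := f.f
  map_id _ := rfl
  map_comp _ _ := rfl

/-- An edge-point of an open-graph. -/
def IsEdgePoint (G : OGraph) (p : G.X.G.P) : Prop := G.X.τ.pp p = TyP.eps

/-- An input: an edge-point with no in-edges. -/
def IsInput (G : OGraph) (p : G.X.G.P) : Prop :=
  IsEdgePoint G p ∧ ∀ e, G.X.G.t e ≠ p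

/-- An output: an edge-point with no out-edges. -/
def IsOutput (G : OGraph) (p : G.X.G.P) : Prop :=
  IsEdgePoint G p ∧ ∀ e, G.X.G.s e ≠ p

/-- The boundary graph of `G`: the point graph `In(G) + Out(G)`. -/
def boundaryGraph (G : OGraph) : OGraph where
  X := { G := { E := Empty
                P := {p // IsInput G p} ⊕ {p // IsOutput G p}
                s := fun e => e.elim
                t := fun e => e.elim }
         τ := { pe := fun e => e.elim
                pp := fun _ => TyP.eps
                hs := fun e => e.elim
                ht := fun e => e.elim } }
  open_in := fun _ _ e => e.elim
  open_out := fun _ _ e => e.elim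

/-- The boundary map `b : In(G) + Out(G) ⟶ G`. -/
def boundaryMap (G : OGraph) : boundaryGraph G ⟶ G :=
  OHom.mk
    (TypedHom.mk
      (GraphHom.mk (fun e => e.elim)
        (fun p => Sum.elim (fun q => q.val) (fun q => q.val) p)
        (fun e => e.elim) (fun e => e.elim))
      (by rintro (⟨p, hp⟩ | ⟨p, hp⟩) <;> exact hp.1)
      (fun e => e.elim))
    (by rintro (⟨p, hp⟩ | ⟨p, hp⟩) hv <;> exact absurd hv (by simp [boundaryGraph]))

/-- An isolated point: both an input and an output. -/
def IsIsolated (G : OGraph) (p : G.X.G.P) : Prop := IsInput G p ∧ IsOutput G p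

/-- A point graph: an open-graph consisting only of (isolated) edge-points. -/
def IsPointGraph (G : OGraph) : Prop :=
  (∀ p, IsEdgePoint G p) ∧ (G.X.G.E → False)

/-- A boundary-coherent span of open-graphs. -/
def BoundaryCoherent {G H₁ H₂ : OGraph} (f : G ⟶ H₁) (g : G ⟶ H₂) : Prop :=
  Mono f ∧ Mono g ∧
  (∀ p, IsInput G p → ¬(IsInput H₁ (OHom.pp f p) ∧ IsInput H₂ (OHom.pp g p))) ∧
  (∀ p, IsOutput G p → ¬(IsOutput H₁ (OHom.pp f p) ∧ IsOutput H₂ (OHom.pp g p)))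

/-- A selective adhesive functor: a faithful functor (into an adhesive category) that
preserves monomorphisms, creates isomorphisms, and reflects pushouts. -/
structure SelectiveAdhesive {C A : Type*} [Category C] [Category A] (F : C ⥤ A) : Prop where
  faithful : ∀ {X Y : C} (f g : X ⟶ Y), F.map f = F.map g → f = g
  preservesMono : ∀ {X Y : C} (f : X ⟶ Y), Mono f → Mono (F.map f)
  createsIso : ∀ {X Y : C} (φ : F.obj X ≅ F.obj Y), ∃ ψ : X ≅ Y, F.map ψ.hom = φ.hom
  reflectsPushout : ∀ {W X Y Z : C} (f : W ⟶ X) (g : W ⟶ Y) (h : X ⟶ Z) (i : Y ⟶ Z),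
    IsPushout (F.map f) (F.map g) (F.map h) (F.map i) → IsPushout f g h i

/-! `S` is the identity on underlying typed graphs, so it is faithful, and the inverse of an
isomorphism of typed graphs is automatically full on vertices. Since no edge of `2_G` joins two
vertices, a map that is full on vertices lifts out-edges to out-edges and in-edges to in-edges;
hence the kernel pair of an open-graph morphism is again an open-graph with projections full on
vertices, and a mono of open-graphs is injective. For pushouts, the legs of a pushout of typed
graphs are jointly surjective on points (test them against two copies of the target glued along
the images), and on the image of each leg the comparison map inherits fullness on vertices from
the corresponding leg of the cocone. -/

namespace TypedGraph

variable {X Y Z : TypedGraph}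

@[ext]
theorem hom_ext {f g : X ⟶ Y} (hpe : f.h.pe = g.h.pe) (hpp : f.h.pp = g.h.pp) : f = g := by
  obtain ⟨⟨_, _, _, _⟩, _, _⟩ := f
  obtain ⟨⟨_, _, _, _⟩, _, _⟩ := g
  cases hpe; cases hpp; rfl

theorem mono_of_injective (f : X ⟶ Y) (hpe : Function.Injective f.h.pe)
    (hpp : Function.Injective f.h.pp) : Mono f :=
  ⟨fun _ _ hab => hom_ext (funext fun e => hpe (congrArg (fun t => t.h.pe e) hab))
    (funext fun p => hpp (congrArg (fun t => t.h.pp p) hab))⟩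

end TypedGraph

theorem TypedHom.typing_pp_eq {X Y : TypedGraph} (f : TypedHom X Y) {p q : X.G.P}
    (h : f.h.pp p = f.h.pp q) : X.τ.pp p = X.τ.pp q := by
  rw [← f.comm_pp p, h, f.comm_pp]

theorem TypedHom.typing_pe_eq {X Y : TypedGraph} (f : TypedHom X Y) {e e' : X.G.E}
    (h : f.h.pe e = f.h.pe e') : X.τ.pe e = X.τ.pe e' := by
  rw [← f.comm_pe e, h, f.comm_pe]

theorem twoG_not_vertex_to_vertex (e : TyE) : twoG.s e = TyP.V → twoG.t e ≠ TyP.V := by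
  cases e <;> simp [twoG]

section FullOnVertices

variable {X Y W : TypedGraph}

def FullOnVerticesAt (f : TypedHom X Y) (v : X.G.P) : Prop :=
  ∀ e, (Y.G.s e = f.h.pp v ∨ Y.G.t e = f.h.pp v) →
    ∃ e', f.h.pe e' = e ∧ (X.G.s e' = v ∨ X.G.t e' = v)

theorem FullOnVertices.lift_src {f : TypedHom X Y} (hf : FullOnVertices f) {v : X.G.P}
    (hv : X.τ.pp v = TyP.V) {e : Y.G.E} (he : Y.G.s e = f.h.pp v) :
    ∃ e', f.h.pe e' = e ∧ X.G.s e' = v := by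
  obtain ⟨e', rfl, hs | ht⟩ := hf v hv e (Or.inl he)
  · exact ⟨e', rfl, hs⟩
  · refine absurd ?_ (twoG_not_vertex_to_vertex (X.τ.pe e') ?_)
    · rw [X.τ.ht, ht, hv]
    · rw [← f.comm_pe, Y.τ.hs, he, f.comm_pp, hv]

theorem FullOnVertices.lift_tgt {f : TypedHom X Y} (hf : FullOnVertices f) {v : X.G.P}
    (hv : X.τ.pp v = TyP.V) {e : Y.G.E} (he : Y.G.t e = f.h.pp v) :
    ∃ e', f.h.pe e' = e ∧ X.G.t e' = v := by
  obtain ⟨e', rfl, hs | ht⟩ := hf v hv e (Or.inr he)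
  · refine absurd ?_ (twoG_not_vertex_to_vertex (X.τ.pe e') ?_)
    · rw [← f.comm_pe, Y.τ.ht, he, f.comm_pp, hv]
    · rw [X.τ.hs, hs, hv]
  · exact ⟨e', rfl, ht⟩

theorem FullOnVerticesAt.of_comp {h : X ⟶ Y} {d : Y ⟶ W} {x : X.G.P}
    (hx : FullOnVerticesAt (h ≫ d) x) : FullOnVerticesAt d (h.h.pp x) := by
  intro e he
  obtain ⟨e', rfl, hadj⟩ := hx e he
  refine ⟨h.h.pe e', rfl, hadj.imp (fun hs => ?_) (fun ht => ?_)⟩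
  · rw [h.h.hs, hs]
  · rw [h.h.ht, ht]

theorem fullOnVertices_of_iso (φ : X ≅ Y) : FullOnVertices φ.hom := by
  have hom_inv (p : X.G.P) : φ.inv.h.pp (φ.hom.h.pp p) = p :=
    congrArg (fun t => t.h.pp p) φ.hom_inv_id
  intro v _ e he
  refine ⟨φ.inv.h.pe e, congrArg (fun t => t.h.pe e) φ.inv_hom_id,
    he.imp (fun hs => ?_) (fun ht => ?_)⟩
  · rw [φ.inv.h.hs, hs, hom_inv]
  · rw [φ.inv.h.ht, ht, hom_inv]

end FullOnVertices

def OGraph.isoOfIso {G H : OGraph} (φ : S.obj G ≅ S.obj H) : G ≅ H where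
  hom := ⟨φ.hom, fullOnVertices_of_iso φ⟩
  inv := ⟨φ.inv, fullOnVertices_of_iso φ.symm⟩
  hom_inv_id := OHom.ext φ.hom_inv_id
  inv_hom_id := OHom.ext φ.inv_hom_id

namespace OHom

variable {G H : OGraph} (f : G ⟶ H)

def kerPair : OGraph where
  X := { G := { E := {ee : G.X.G.E × G.X.G.E // f.f.h.pe ee.1 = f.f.h.pe ee.2}
                P := {pp : G.X.G.P × G.X.G.P // f.f.h.pp pp.1 = f.f.h.pp pp.2}
                s := fun e => ⟨(G.X.G.s e.1.1, G.X.G.s e.1.2), by rw [← f.f.h.hs, ← f.f.h.hs, e.2]⟩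
                t := fun e => ⟨(G.X.G.t e.1.1, G.X.G.t e.1.2), by rw [← f.f.h.ht, ← f.f.h.ht, e.2]⟩ }
         τ := { pe := fun e => G.X.τ.pe e.1.1
                pp := fun p => G.X.τ.pp p.1.1
                hs := fun e => G.X.τ.hs e.1.1
                ht := fun e => G.X.τ.ht e.1.1 } }
  open_in := by
    rintro ⟨⟨p, q⟩, hpq⟩ hp e₁ e₂ h₁ h₂
    have hq : G.X.τ.pp q = TyP.eps := (f.f.typing_pp_eq hpq).symm.trans hp
    have h₁ := congrArg Subtype.val h₁
    have h₂ := congrArg Subtype.val h₂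
    simp only [Prod.mk.injEq] at h₁ h₂
    exact Subtype.ext (Prod.ext (G.open_in p hp _ _ h₁.1 h₂.1) (G.open_in q hq _ _ h₁.2 h₂.2))
  open_out := by
    rintro ⟨⟨p, q⟩, hpq⟩ hp e₁ e₂ h₁ h₂
    have hq : G.X.τ.pp q = TyP.eps := (f.f.typing_pp_eq hpq).symm.trans hp
    have h₁ := congrArg Subtype.val h₁
    have h₂ := congrArg Subtype.val h₂
    simp only [Prod.mk.injEq] at h₁ h₂
    exact Subtype.ext (Prod.ext (G.open_out p hp _ _ h₁.1 h₂.1) (G.open_out q hq _ _ h₁.2 h₂.2))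

def kerFst : kerPair f ⟶ G where
  f := ⟨⟨fun e => e.1.1, fun p => p.1.1, fun _ => rfl, fun _ => rfl⟩, fun _ => rfl, fun _ => rfl⟩
  full := by
    rintro ⟨⟨p, q⟩, hpq⟩ hp e hadj
    have hq : G.X.τ.pp q = TyP.V := (f.f.typing_pp_eq hpq).symm.trans hp
    rcases hadj with hs | ht
    · obtain ⟨e', he', hs'⟩ := f.full.lift_src hq (e := f.f.h.pe e) (by rw [f.f.h.hs, hs, hpq])
      exact ⟨⟨(e, e'), he'.symm⟩, rfl, Or.inl (Subtype.ext (Prod.ext hs hs'))⟩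
    · obtain ⟨e', he', ht'⟩ := f.full.lift_tgt hq (e := f.f.h.pe e) (by rw [f.f.h.ht, ht, hpq])
      exact ⟨⟨(e, e'), he'.symm⟩, rfl, Or.inr (Subtype.ext (Prod.ext ht ht'))⟩

def kerSnd : kerPair f ⟶ G where
  f := ⟨⟨fun e => e.1.2, fun p => p.1.2, fun _ => rfl, fun _ => rfl⟩,
    fun p => (f.f.typing_pp_eq p.2).symm, fun e => (f.f.typing_pe_eq e.2).symm⟩
  full := by
    rintro ⟨⟨p, q⟩, hpq⟩ hp e (hs | ht)
    · obtain ⟨e', he', hs'⟩ := f.full.lift_src hp (e := f.f.h.pe e) (by rw [f.f.h.hs, hs, hpq])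
      exact ⟨⟨(e', e), he'⟩, rfl, Or.inl (Subtype.ext (Prod.ext hs' hs))⟩
    · obtain ⟨e', he', ht'⟩ := f.full.lift_tgt hp (e := f.f.h.pe e) (by rw [f.f.h.ht, ht, hpq])
      exact ⟨⟨(e', e), he'⟩, rfl, Or.inr (Subtype.ext (Prod.ext ht' ht))⟩

theorem kerFst_eq_kerSnd [Mono f] : kerFst f = kerSnd f :=
  (cancel_mono f).1 (OHom.ext (TypedGraph.hom_ext (funext fun e => e.2) (funext fun p => p.2)))

theorem injective_pe_of_mono [Mono f] : Function.Injective f.f.h.pe := fun e e' h =>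
  congrArg (fun φ : kerPair f ⟶ G => φ.f.h.pe ⟨(e, e'), h⟩) (kerFst_eq_kerSnd f)

theorem injective_pp_of_mono [Mono f] : Function.Injective f.f.h.pp := fun p q h =>
  congrArg (fun φ : kerPair f ⟶ G => φ.f.h.pp ⟨(p, q), h⟩) (kerFst_eq_kerSnd f)

end OHom

namespace TypedGraph

section Doubling

variable {Z : TypedGraph} (A : Z.G.P → Prop)

open Classical in
noncomputable def splitPoint (p : Z.G.P) : Z.G.P ⊕ Z.G.P := if A p then .inl p else .inr p

open Classical in
noncomputable def splitEdge (e : Z.G.E) : Z.G.E ⊕ Z.G.E :=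
  if A (Z.G.s e) ∧ A (Z.G.t e) then .inl e else .inr e

variable {A}

theorem splitPoint_of_mem {p : Z.G.P} (hp : A p) : splitPoint A p = .inl p := if_pos hp

theorem mem_of_splitPoint_eq {p : Z.G.P} (hp : splitPoint A p = .inl p) : A p := by
  by_contra h
  rw [splitPoint, if_neg h] at hp
  exact Sum.inr_ne_inl hp

theorem elim_splitPoint {α : Type*} (g : Z.G.P → α) (p : Z.G.P) :
    Sum.elim g g (splitPoint A p) = g p := by
  unfold splitPoint; split_ifs <;> rfl

variable (A)

/-- Two copies of `Z` glued along `A`: the second copy of an edge is attached through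
`splitPoint A`, so second copies of points in `A` stay isolated. -/
noncomputable def doubling : TypedGraph where
  G := { E := Z.G.E ⊕ Z.G.E
         P := Z.G.P ⊕ Z.G.P
         s := Sum.elim (Sum.inl ∘ Z.G.s) (splitPoint A ∘ Z.G.s)
         t := Sum.elim (Sum.inl ∘ Z.G.t) (splitPoint A ∘ Z.G.t) }
  τ := { pe := Sum.elim Z.τ.pe Z.τ.pe
         pp := Sum.elim Z.τ.pp Z.τ.pp
         hs := by rintro (e | e) <;> simp only [Sum.elim_inl, Sum.elim_inr, Function.comp_apply,
                    elim_splitPoint, Z.τ.hs]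
         ht := by rintro (e | e) <;> simp only [Sum.elim_inl, Sum.elim_inr, Function.comp_apply,
                    elim_splitPoint, Z.τ.ht] }

def doublingInl : Z ⟶ doubling A :=
  ⟨⟨Sum.inl, Sum.inl, fun _ => rfl, fun _ => rfl⟩, fun _ => rfl, fun _ => rfl⟩

noncomputable def doublingSplit : Z ⟶ doubling A where
  h := { pe := splitEdge A
         pp := splitPoint A
         hs := fun e => by
           unfold splitEdge
           split_ifs with he
           · exact (splitPoint_of_mem he.1).symm
           · rfl
         ht := fun e => by
           unfold splitEdge
           split_ifs with he
           · exact (splitPoint_of_mem he.2).symm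
           · rfl }
  comm_pp := elim_splitPoint Z.τ.pp
  comm_pe := fun e => by
    show Sum.elim Z.τ.pe Z.τ.pe (splitEdge A e) = Z.τ.pe e
    unfold splitEdge; split_ifs <;> rfl

variable {A}

theorem comp_doublingInl_eq {X : TypedGraph} (k : X ⟶ Z) (hk : ∀ x, A (k.h.pp x)) :
    k ≫ doublingInl A = k ≫ doublingSplit A := by
  refine hom_ext (funext fun e => ?_) (funext fun x => ?_)
  · have hs : A (Z.G.s (k.h.pe e)) := k.h.hs e ▸ hk _
    have ht : A (Z.G.t (k.h.pe e)) := k.h.ht e ▸ hk _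
    exact (if_pos ⟨hs, ht⟩).symm
  · exact (splitPoint_of_mem (hk x)).symm

theorem forall_mem_of_doublingInl_eq (h : doublingInl A = doublingSplit A) (p : Z.G.P) : A p :=
  mem_of_splitPoint_eq (congrArg (fun t => t.h.pp p) h).symm

end Doubling

theorem jointly_surjective_of_hom_ext {X Y Z : TypedGraph} {h : X ⟶ Z} {i : Y ⟶ Z}
    (hext : ∀ {V : TypedGraph} (u v : Z ⟶ V), h ≫ u = h ≫ v → i ≫ u = i ≫ v → u = v)
    (p : Z.G.P) : (∃ x, h.h.pp x = p) ∨ ∃ y, i.h.pp y = p :=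
  forall_mem_of_doublingInl_eq (A := fun p => (∃ x, h.h.pp x = p) ∨ ∃ y, i.h.pp y = p)
    (hext _ _ (comp_doublingInl_eq h fun x => Or.inl ⟨x, rfl⟩)
      (comp_doublingInl_eq i fun y => Or.inr ⟨y, rfl⟩)) p

end TypedGraph

section Pushout

variable {W X Y Z : OGraph} {f : W ⟶ X} {g : W ⟶ Y} {h : X ⟶ Z} {i : Y ⟶ Z}

theorem map_S_pushoutCocone_condition (s : PushoutCocone f g) :
    S.map f ≫ S.map s.inl = S.map g ≫ S.map s.inr := by
  rw [← S.map_comp, ← S.map_comp, s.condition]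

theorem fullOnVertices_desc (hp : IsPushout (S.map f) (S.map g) (S.map h) (S.map i))
    (s : PushoutCocone f g) :
    FullOnVertices (hp.desc (S.map s.inl) (S.map s.inr) (map_S_pushoutCocone_condition s)) := by
  intro v hv
  rcases TypedGraph.jointly_surjective_of_hom_ext (fun _ _ => hp.hom_ext) v with ⟨x, rfl⟩ | ⟨y, rfl⟩
  · apply FullOnVerticesAt.of_comp (h := S.map h)
    rw [hp.inl_desc]
    exact s.inl.full x ((h.f.comm_pp x).symm.trans hv)
  · apply FullOnVerticesAt.of_comp (h := S.map i)
    rw [hp.inr_desc]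
    exact s.inr.full y ((i.f.comm_pp y).symm.trans hv)

noncomputable def pushoutDesc (hp : IsPushout (S.map f) (S.map g) (S.map h) (S.map i))
    (s : PushoutCocone f g) : Z ⟶ s.pt :=
  ⟨_, fullOnVertices_desc hp s⟩

theorem isPushout_of_isPushout_map (hp : IsPushout (S.map f) (S.map g) (S.map h) (S.map i)) :
    IsPushout f g h i :=
  IsPushout.of_isColimit <| PushoutCocone.IsColimit.mk (OHom.ext hp.w)
    (pushoutDesc hp)
    (fun _ => OHom.ext (hp.inl_desc _ _ _))
    (fun _ => OHom.ext (hp.inr_desc _ _ _))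
    (fun _ _ hl hr => OHom.ext (hp.hom_ext
      ((congrArg OHom.f hl).trans (hp.inl_desc _ _ _).symm)
      ((congrArg OHom.f hr).trans (hp.inr_desc _ _ _).symm)))

end Pushout

/-- The embedding functor `S : OGraph ⥤ Graph/2_G` is a selective adhesive functor:
faithful, preserves monomorphisms, creates isomorphisms, and reflects pushouts. -/
theorem S_selectiveAdhesive : SelectiveAdhesive S := by
  exact
    { faithful := fun _ _ h => OHom.ext h
      preservesMono := fun f _ =>
        TypedGraph.mono_of_injective _ (OHom.injective_pe_of_mono f) (OHom.injective_pp_of_mono f)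
      createsIso := fun φ => ⟨OGraph.isoOfIso φ, rfl⟩
      reflectsPushout := fun _ _ _ _ => isPushout_of_isPushout_map }
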